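/- arXiv:1307.4953 — 2 statements merged into one kernel-verified Lean document; each statement's English description precedes it below -/
import Mathlib

section
/- Let A₁,…,A_s be real matrices with Aᵢ of size m × ℓᵢ, let w ∈ ℝ₊ˢ be a nonnegative weight vector, let M(w) = Σᵢ wᵢAᵢAᵢᵀ, let K be an m × k matrix of full column rank with every column of K in the column space of M(w), and let G satisfy M(w)·G·M(w) = M(w). Then for all matrices Zᵢ ∈ ℝ^{ℓᵢ×k} (i = 1,…,s), all scalars tᵢⱼ ≥ 0 (i = 1,…,s, j = 1,…,k) and every lower triangular J ∈ ℝ^{k×k} satisfying Σᵢ AᵢZᵢ = KJ, ‖Zᵢeⱼ‖² ≤ tᵢⱼ·wᵢ for all i,j, and Σᵢ tᵢⱼ ≤ Jⱼⱼ for all j, the inequality (∏ⱼ Jⱼⱼ) · det(KᵀGK) ≤ 1 holds. -/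
/-!
Write `M = M(w)` and choose `H` with `M H = K`; then `KᵀGK = HᵀMH` for every g-inverse `G`.
For the column `x = H J eⱼ` we get `M x = K J eⱼ = Σᵢ Aᵢ Zᵢ eⱼ`, so two applications of
Cauchy–Schwarz give `(xᵀMx)² ≤ xᵀMx · Σᵢ tᵢⱼ`: the diagonal of `Jᵀ(KᵀGK)J` is bounded by that
of `J`. Hadamard's inequality then yields `(∏ Jⱼⱼ)² det(KᵀGK) = det(Jᵀ(KᵀGK)J) ≤ ∏ Jⱼⱼ`.
-/

open Matrix

theorem Real.prod_le_one_of_sum_le_card {ι : Type*} [Fintype ι] {z : ι → ℝ}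
    (hz : ∀ i, 0 ≤ z i) (hsum : ∑ i, z i ≤ Fintype.card ι) : ∏ i, z i ≤ 1 := by
  rcases isEmpty_or_nonempty ι with _ | _
  · simp
  have hcard : (0 : ℝ) < Fintype.card ι := by exact_mod_cast Fintype.card_pos
  have amgm := Real.geom_mean_le_arith_mean Finset.univ (fun _ => 1) z
    (fun _ _ => zero_le_one) (by simpa using hcard) (fun i _ => hz i)
  simp only [Real.rpow_one, one_mul, Finset.sum_const, Finset.card_univ, nsmul_eq_mul,
    mul_one] at amgm
  have h := amgm.trans ((div_le_one hcard).2 hsum)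
  rwa [Real.rpow_inv_le_iff_of_pos (Finset.prod_nonneg fun i _ => hz i) zero_le_one hcard,
    Real.one_rpow] at h

namespace Matrix
variable {n : Type*} [Fintype n] [DecidableEq n]

theorem PosSemidef.det_le_one_of_trace_le_card {Q : Matrix n n ℝ} (hQ : Q.PosSemidef)
    (htr : Q.trace ≤ Fintype.card n) : Q.det ≤ 1 := by
  rw [hQ.isHermitian.det_eq_prod_eigenvalues]
  rw [hQ.isHermitian.trace_eq_sum_eigenvalues] at htr
  exact Real.prod_le_one_of_sum_le_card hQ.eigenvalues_nonneg (by simpa using htr)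

/-- Hadamard's inequality. Rescaling to unit diagonal reduces it to AM–GM on the eigenvalues;
a zero diagonal entry of a positive semidefinite matrix forces a zero column. -/
theorem PosSemidef.det_le_prod_diag {P : Matrix n n ℝ} (hP : P.PosSemidef) :
    P.det ≤ ∏ j, P j j := by
  by_cases hpos : ∀ j, 0 < P j j
  · set D := diagonal fun j => (√(P j j))⁻¹
    have hQ : (D * P * D).PosSemidef := by
      simpa [D] using hP.mul_mul_conjTranspose_same D
    have hQdiag : ∀ j, (D * P * D) j j = 1 := fun j => by
      have hs : √(P j j) ≠ 0 := (Real.sqrt_pos.2 (hpos j)).ne'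
      simp only [D, mul_diagonal, diagonal_mul]
      field_simp
      exact (Real.sq_sqrt (hpos j).le).symm
    have hdet : (D * P * D).det = P.det / ∏ j, P j j := by
      have hsq : (∏ j, (√(P j j))⁻¹) * (∏ j, (√(P j j))⁻¹) = (∏ j, P j j)⁻¹ := by
        rw [← Finset.prod_mul_distrib, ← Finset.prod_inv_distrib]
        exact Finset.prod_congr rfl fun j _ => by
          rw [← mul_inv, Real.mul_self_sqrt (hpos j).le]
      rw [det_mul, det_mul, det_diagonal, div_eq_mul_inv, ← hsq]
      ring
    have := hQ.det_le_one_of_trace_le_card (by simp [trace, hQdiag])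
    rwa [hdet, div_le_one (Finset.prod_pos fun j _ => hpos j)] at this
  · push Not at hpos
    obtain ⟨j, hj⟩ := hpos
    have hcol : P *ᵥ Pi.single j 1 = 0 := by
      rw [← hP.dotProduct_mulVec_zero_iff]
      simpa using le_antisymm hj hP.diag_nonneg
    rw [det_eq_zero_of_column_eq_zero j fun i => by simpa using congrFun hcol i]
    exact Finset.prod_nonneg fun i _ => hP.diag_nonneg

theorem transpose_mul_mul_eq_of_mul_mul_self {m k R : Type*} [Fintype m] [CommRing R]
    {M G : Matrix m m R} (hM : Mᵀ = M) (hG : M * G * M = M) {H K : Matrix m k R}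
    (hK : M * H = K) : Kᵀ * G * K = Hᵀ * M * H := by
  rw [← hK, transpose_mul, hM]
  calc Hᵀ * M * G * (M * H) = Hᵀ * (M * G * M) * H := by simp only [Matrix.mul_assoc]
    _ = Hᵀ * M * H := by rw [hG]

theorem transpose_mul_mul_apply_self {m k R : Type*} [Fintype m] [CommRing R]
    (B : Matrix m k R) (M : Matrix m m R) (j : k) :
    (Bᵀ * M * B) j j = B.col j ⬝ᵥ M *ᵥ B.col j := by
  rw [dotProduct_mulVec, ← mulVec_transpose]
  simp only [mul_apply, transpose_apply, dotProduct, mulVec, col_apply, Finset.sum_mul]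
  exact Finset.sum_congr rfl fun x _ => Finset.sum_congr rfl fun i _ => by ring

theorem PosSemidef.prod_diag_mul_det_le_one [LinearOrder n] {N J : Matrix n n ℝ}
    (hN : N.PosSemidef) (hJ : J.IsLowerTriangular) (hdiag : ∀ j, (Jᵀ * N * J) j j ≤ J j j) :
    (∏ j, J j j) * N.det ≤ 1 := by
  have hP : (Jᵀ * N * J).PosSemidef := by simpa using hN.conjTranspose_mul_mul_same J
  have hbound : (∏ j, J j j) * ((∏ j, J j j) * N.det) ≤ (∏ j, J j j) * 1 :=
    calc _ = (Jᵀ * N * J).det := by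
          rw [det_mul, det_mul, det_transpose, det_of_isLowerTriangular J hJ]
          ring
      _ ≤ ∏ j, (Jᵀ * N * J) j j := hP.det_le_prod_diag
      _ ≤ ∏ j, J j j := Finset.prod_le_prod (fun j _ => hP.diag_nonneg) fun j _ => hdiag j
      _ = _ := (mul_one _).symm
  have hJ0 : 0 ≤ ∏ j, J j j := Finset.prod_nonneg fun j _ => hP.diag_nonneg.trans (hdiag j)
  rcases hJ0.eq_or_lt with h0 | hpos
  · simp [← h0]
  · exact le_of_mul_le_mul_left hbound hpos

end Matrix

section InformationMatrix

variable {m ι : Type*} [Fintype m] [Fintype ι] {ℓ : ι → Type*} [∀ i, Fintype (ℓ i)]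
  (A : ∀ i, Matrix m (ℓ i) ℝ) (w : ι → ℝ)

def infoMatrix : Matrix m m ℝ := ∑ i, w i • (A i * (A i)ᵀ)

theorem posSemidef_infoMatrix (hw : ∀ i, 0 ≤ w i) : (infoMatrix A w).PosSemidef :=
  posSemidef_sum _ fun i _ => by
    simpa using (posSemidef_self_mul_conjTranspose (A i)).smul (hw i)

theorem dotProduct_infoMatrix_mulVec (x : m → ℝ) :
    x ⬝ᵥ infoMatrix A w *ᵥ x = ∑ i, w i * ∑ r, ((A i)ᵀ *ᵥ x) r ^ 2 := by
  simp only [infoMatrix, sum_mulVec, dotProduct_sum]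
  refine Finset.sum_congr rfl fun i _ => ?_
  rw [smul_mulVec, dotProduct_smul, ← mulVec_mulVec, dotProduct_mulVec, ← mulVec_transpose]
  simp [dotProduct, sq]

theorem dotProduct_infoMatrix_mulVec_le_sum (hw : ∀ i, 0 ≤ w i) {x : m → ℝ}
    (z : ∀ i, ℓ i → ℝ) (t : ι → ℝ) (ht : ∀ i, 0 ≤ t i)
    (hx : infoMatrix A w *ᵥ x = ∑ i, A i *ᵥ z i) (hz : ∀ i, ∑ r, z i r ^ 2 ≤ t i * w i) :
    x ⬝ᵥ infoMatrix A w *ᵥ x ≤ ∑ i, t i := by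
  set u : ∀ i, ℓ i → ℝ := fun i => (A i)ᵀ *ᵥ x
  have hq : x ⬝ᵥ infoMatrix A w *ᵥ x = ∑ i, u i ⬝ᵥ z i := by
    simp only [hx, dotProduct_sum, dotProduct_mulVec, u, mulVec_transpose]
  have hquad := dotProduct_infoMatrix_mulVec A w x
  have hf : ∀ i ∈ Finset.univ, 0 ≤ w i * ∑ r, u i r ^ 2 := fun i _ =>
    mul_nonneg (hw i) (Finset.sum_nonneg fun r _ => sq_nonneg _)
  have hterm : ∀ i ∈ Finset.univ, (u i ⬝ᵥ z i) ^ 2 ≤ (w i * ∑ r, u i r ^ 2) * t i := by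
    intro i _
    calc (u i ⬝ᵥ z i) ^ 2 ≤ (∑ r, u i r ^ 2) * ∑ r, z i r ^ 2 :=
          Finset.sum_mul_sq_le_sq_mul_sq _ _ _
      _ ≤ (∑ r, u i r ^ 2) * (t i * w i) :=
          mul_le_mul_of_nonneg_left (hz i) (Finset.sum_nonneg fun r _ => sq_nonneg _)
      _ = (w i * ∑ r, u i r ^ 2) * t i := by ring
  set q := x ⬝ᵥ infoMatrix A w *ᵥ x
  have hcs : q * q ≤ q * ∑ i, t i := by
    rw [← sq]
    calc q ^ 2 = (∑ i, u i ⬝ᵥ z i) ^ 2 := by rw [hq]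
      _ ≤ (∑ i, w i * ∑ r, u i r ^ 2) * ∑ i, t i :=
          Finset.sum_sq_le_sum_mul_sum_of_sq_le_mul _ hf (fun i _ => ht i) hterm
      _ = q * ∑ i, t i := by rw [hquad]
  rcases (show 0 ≤ q from hquad ▸ Finset.sum_nonneg hf).eq_or_lt with hq0 | hqpos
  · exact hq0 ▸ Finset.sum_nonneg fun i _ => ht i
  · exact le_of_mul_le_mul_left hcs hqpos

end InformationMatrix

theorem stmt_7_general (s m k : ℕ) (ℓ : Fin s → ℕ)
    (A : (i : Fin s) → Matrix (Fin m) (Fin (ℓ i)) ℝ)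
    (w : Fin s → ℝ) (hw : ∀ i, 0 ≤ w i)
    (K : Matrix (Fin m) (Fin k) ℝ)
    (hest : ∀ j : Fin k, ∃ v : Fin m → ℝ,
      (∑ i, w i • (A i * (A i)ᵀ)) *ᵥ v = fun r => K r j)
    (G : Matrix (Fin m) (Fin m) ℝ)
    (hG : (∑ i, w i • (A i * (A i)ᵀ)) * G * (∑ i, w i • (A i * (A i)ᵀ)) =
      ∑ i, w i • (A i * (A i)ᵀ))
    (Z : (i : Fin s) → Matrix (Fin (ℓ i)) (Fin k) ℝ)
    (t : Fin s → Fin k → ℝ) (ht : ∀ i j, 0 ≤ t i j)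
    (J : Matrix (Fin k) (Fin k) ℝ)
    (hJtri : ∀ a b : Fin k, (a : ℕ) < (b : ℕ) → J a b = 0)
    (hAZ : ∑ i, A i * Z i = K * J)
    (hZ : ∀ (i : Fin s) (j : Fin k), (∑ r, Z i r j ^ 2) ≤ t i j * w i)
    (hsum : ∀ j : Fin k, ∑ i, t i j ≤ J j j) :
    (∏ j, J j j) * (Kᵀ * G * K).det ≤ 1 := by
  classical
  set M := infoMatrix A w
  have hM : M.PosSemidef := posSemidef_infoMatrix A w hw
  choose v hv using hest
  set H : Matrix (Fin m) (Fin k) ℝ := of fun r j => v j r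
  have hMH : M * H = K := by
    ext r j
    exact congrFun (hv j) r
  have hMsymm : Mᵀ = M := (conjTranspose_eq_transpose_of_trivial M).symm.trans hM.isHermitian
  rw [transpose_mul_mul_eq_of_mul_mul_self hMsymm hG hMH]
  have hN : (Hᵀ * M * H).PosSemidef := by simpa using hM.conjTranspose_mul_mul_same H
  refine hN.prod_diag_mul_det_le_one hJtri fun j => ?_
  have hcol : M *ᵥ (H * J).col j = ∑ i, A i *ᵥ (Z i).col j := by
    simp only [← mulVec_single_one, mulVec_mulVec, ← Matrix.mul_assoc, hMH, ← hAZ, sum_mulVec]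
  rw [show Jᵀ * (Hᵀ * M * H) * J = (H * J)ᵀ * M * (H * J) by
    simp only [transpose_mul, Matrix.mul_assoc], transpose_mul_mul_apply_self]
  exact (dotProduct_infoMatrix_mulVec_le_sum A w hw _ (t · j) (ht · j) hcol
    fun i => hZ i j).trans (hsum j)

/-- Weak duality part of the SOCP characterization of the `D_K`-criterion
(Theorem `det_socr`): every feasible point `(Zᵢ, tᵢⱼ, J)` of the SOCP satisfies
`(∏ⱼ Jⱼⱼ) · det(KᵀGK) ≤ 1`, i.e. `∏ⱼ Jⱼⱼ ≤ det C_K(M(w))`. -/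
theorem stmt_7 (s m k : ℕ) (ℓ : Fin s → ℕ)
    (A : (i : Fin s) → Matrix (Fin m) (Fin (ℓ i)) ℝ)
    (w : Fin s → ℝ) (hw : ∀ i, 0 ≤ w i)
    (K : Matrix (Fin m) (Fin k) ℝ) (hK : K.rank = k) (hk : k ≤ m)
    (hest : ∀ j : Fin k, ∃ v : Fin m → ℝ,
      (∑ i, w i • (A i * (A i)ᵀ)) *ᵥ v = fun r => K r j)
    (G : Matrix (Fin m) (Fin m) ℝ)
    (hG : (∑ i, w i • (A i * (A i)ᵀ)) * G * (∑ i, w i • (A i * (A i)ᵀ)) =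
      ∑ i, w i • (A i * (A i)ᵀ))
    (Z : (i : Fin s) → Matrix (Fin (ℓ i)) (Fin k) ℝ)
    (t : Fin s → Fin k → ℝ) (ht : ∀ i j, 0 ≤ t i j)
    (J : Matrix (Fin k) (Fin k) ℝ)
    (hJtri : ∀ a b : Fin k, (a : ℕ) < (b : ℕ) → J a b = 0)
    (hAZ : ∑ i, A i * Z i = K * J)
    (hZ : ∀ (i : Fin s) (j : Fin k), (∑ r, Z i r j ^ 2) ≤ t i j * w i)
    (hsum : ∀ j : Fin k, ∑ i, t i j ≤ J j j) :
    (∏ j, J j j) * (Kᵀ * G * K).det ≤ 1 :=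
  stmt_7_general s m k ℓ A w hw K hest G hG Z t ht J hJtri hAZ hZ hsum
end

section
/- Let A₁,…,A_s be real matrices with Aᵢ of size m × ℓᵢ, let w ∈ ℝ₊ˢ be a nonnegative weight vector, let M(w) = Σᵢ wᵢAᵢAᵢᵀ, let K be an m × k matrix of full column rank with every column of K in the column space of M(w), and let G satisfy M(w)·G·M(w) = M(w). Then there exist matrices Zᵢ ∈ ℝ^{ℓᵢ×k}, scalars tᵢⱼ ≥ 0 and a lower triangular J ∈ ℝ^{k×k} with Σᵢ AᵢZᵢ = KJ, ‖Zᵢeⱼ‖² ≤ tᵢⱼwᵢ for all i,j, Σᵢ tᵢⱼ ≤ Jⱼⱼ for all j, such that (∏ⱼ Jⱼⱼ)·det(KᵀGK) = 1. Consequently the optimal value of this optimization problem equals det C_K(M(w)) = 1/det(KᵀGK), i.e., the k-th root of the optimal value equals the D_K-criterion Φ_{D|K}(M(w)). -/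
/-! Estimability gives `K = M U` with `M = Σᵢ wᵢ AᵢAᵢᵀ`, and `MGM = M` turns `KᵀGK` into
`UᵀMU`, which is positive definite because `K = MU` has full column rank. An LDL decomposition
of its inverse, with rescaled columns, yields a lower triangular `J` such that `Jᵀ (KᵀGK) J` is
the diagonal matrix with entries `Jⱼⱼ`. Then `Zᵢ = wᵢ Aᵢᵀ U J` and `tᵢⱼ = wᵢ ‖Aᵢᵀ U J eⱼ‖²` are
feasible, with `Σᵢ tᵢⱼ = (Jᵀ KᵀGK J)ⱼⱼ = Jⱼⱼ`, and taking determinants gives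
`(∏ⱼ Jⱼⱼ)² det(KᵀGK) = ∏ⱼ Jⱼⱼ`. -/

open Matrix

namespace Matrix

variable {n p : Type*} [Fintype n]

theorem mulVec_injective_of_rank_eq_card {R m : Type*} [Field R] {A : Matrix m n R}
    (hA : A.rank = Fintype.card n) : Function.Injective A.mulVec := by
  have h := A.mulVecLin.finrank_range_add_finrank_ker
  rw [show Module.finrank R (LinearMap.range A.mulVecLin) = _ from hA,
    Module.finrank_fintype_fun_eq_card, add_eq_left, Submodule.finrank_eq_zero] at h
  exact LinearMap.ker_eq_bot.mp h

open scoped ComplexOrder in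
theorem PosSemidef.posDef_conjTranspose_mul_mul {𝕜 : Type*} [RCLike 𝕜] [Fintype p]
    {M : Matrix n n 𝕜} (hM : M.PosSemidef) {U : Matrix n p 𝕜}
    (hMU : Function.Injective (M * U).mulVec) : (Uᴴ * M * U).PosDef := by
  refine .of_dotProduct_mulVec_pos (hM.conjTranspose_mul_mul_same U).1 fun x hx => ?_
  have hquad : star x ⬝ᵥ (Uᴴ * M * U) *ᵥ x = star (U *ᵥ x) ⬝ᵥ M *ᵥ (U *ᵥ x) := by
    rw [star_mulVec, ← mulVec_mulVec, ← mulVec_mulVec, dotProduct_mulVec, vecMul_conjTranspose]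
  have hne : M *ᵥ (U *ᵥ x) ≠ 0 := by
    rw [mulVec_mulVec]
    exact fun h => hx (hMU (h.trans (mulVec_zero _).symm))
  rw [hquad]
  exact lt_of_le_of_ne (hM.dotProduct_mulVec_nonneg _)
    fun h => hne ((hM.dotProduct_mulVec_zero_iff _).1 h.symm)

theorem IsSymm.transpose_mul_mul_mul_eq_of_mul_mul_eq_self {R : Type*} [CommSemiring R]
    {M G : Matrix n n R} (hM : M.IsSymm) (hG : M * G * M = M) (U : Matrix n p R) :
    (M * U)ᵀ * G * (M * U) = Uᵀ * M * U := by
  rw [transpose_mul, hM.eq]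
  calc Uᵀ * M * G * (M * U) = Uᵀ * (M * G * M) * U := by simp only [Matrix.mul_assoc]
    _ = Uᵀ * M * U := by rw [hG, Matrix.mul_assoc]

theorem exists_isLowerTriangular_transpose_mul_mul_eq_diagonal [LinearOrder n]
    [WellFoundedLT n] [LocallyFiniteOrderBot n] {B : Matrix n n ℝ} (hB : B.PosDef) :
    ∃ (L : Matrix n n ℝ) (c : n → ℝ), L.IsLowerTriangular ∧ IsUnit L.det ∧
      Lᵀ * B * L = diagonal c := by
  -- `T B⁻¹ Tᵀ` is diagonal for the LDL factor `T` of `B⁻¹`; invert it and take `L = T⁻¹`.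
  set T := LDL.lowerInv hB.inv
  have hT : T.IsLowerTriangular := fun i j hij => LDL.lowerInv_triangular hB.inv hij
  refine ⟨T⁻¹, Ring.inverse (LDL.diagEntries hB.inv), blockTriangular_inv_of_blockTriangular hT,
    isUnit_det_of_invertible _, ?_⟩
  have hconj := LDL.diag_eq_lowerInv_conj hB.inv
  rw [conjTranspose_eq_transpose_of_trivial, LDL.diag] at hconj
  rw [← inv_diagonal, hconj, mul_inv_rev, mul_inv_rev,
    nonsing_inv_nonsing_inv _ hB.det_pos.ne'.isUnit, transpose_nonsing_inv, Matrix.mul_assoc]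

theorem exists_isLowerTriangular_transpose_mul_mul_eq_diagonal_diag [LinearOrder n]
    [WellFoundedLT n] [LocallyFiniteOrderBot n] {B : Matrix n n ℝ} (hB : B.PosDef) :
    ∃ J : Matrix n n ℝ, J.IsLowerTriangular ∧ Jᵀ * B * J = diagonal J.diag ∧
      ∀ j, J j j ≠ 0 := by
  obtain ⟨L, c, hL, hLdet, hLBL⟩ := exists_isLowerTriangular_transpose_mul_mul_eq_diagonal hB
  have hc : ∀ j, c j ≠ 0 := by
    have h := congrArg det hLBL
    rw [det_mul, det_mul, det_transpose, det_diagonal] at h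
    have hprod : ∏ j, c j ≠ 0 :=
      h ▸ mul_ne_zero (mul_ne_zero hLdet.ne_zero hB.det_pos.ne') hLdet.ne_zero
    exact fun j => Finset.prod_ne_zero_iff.mp hprod j (Finset.mem_univ j)
  have hLdiag : ∀ j, L j j ≠ 0 := by
    have hprod := hLdet.ne_zero
    rw [det_of_isLowerTriangular L hL] at hprod
    exact fun j => Finset.prod_ne_zero_iff.mp hprod j (Finset.mem_univ j)
  -- Scaling column `j` of `L` by `e j` scales `(Lᵀ B L) j j = c j` by `e j ^ 2` and `L j j` by
  -- `e j`, so `e j = L j j / c j` makes the two agree.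
  set e : n → ℝ := fun j => L j j / c j
  refine ⟨L * diagonal e, hL.mul (blockTriangular_diagonal _), ?_, fun j => ?_⟩
  · calc (L * diagonal e)ᵀ * B * (L * diagonal e) = diagonal e * (Lᵀ * B * L) * diagonal e := by
          simp only [transpose_mul, diagonal_transpose, Matrix.mul_assoc]
      _ = diagonal (L * diagonal e).diag := by
          rw [hLBL, diagonal_mul_diagonal, diagonal_mul_diagonal]
          congr 1
          ext j
          simp only [diag_apply, mul_diagonal, e]
          field_simp [hc j]
  · rw [mul_diagonal]
    exact mul_ne_zero (hLdiag j) (div_ne_zero (hLdiag j) (hc j))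

theorem prod_diag_mul_det_eq_one [LinearOrder n] {J B : Matrix n n ℝ}
    (hJ : J.IsLowerTriangular) (hJB : Jᵀ * B * J = diagonal J.diag) (hdiag : ∀ j, J j j ≠ 0) :
    (∏ j, J j j) * B.det = 1 := by
  have hdet := congrArg det hJB
  rw [det_mul, det_mul, det_transpose, det_diagonal, det_of_isLowerTriangular J hJ] at hdet
  have hprod : ∏ j, J j j ≠ 0 := Finset.prod_ne_zero_iff.mpr fun j _ => hdiag j
  exact mul_left_cancel₀ hprod (by simp only [diag_apply] at hdet; linear_combination hdet)

theorem transpose_mul_sum_smul_mul_transpose_mul_apply_self {R ι m : Type*} [CommRing R]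
    [Fintype ι] [Fintype m] {ℓ : ι → Type*} [∀ i, Fintype (ℓ i)]
    (A : ∀ i, Matrix m (ℓ i) R) (w : ι → R) (Y : Matrix m p R) (j : p) :
    (Yᵀ * (∑ i, w i • (A i * (A i)ᵀ)) * Y) j j = ∑ i, w i * ∑ r, ((A i)ᵀ * Y) r j ^ 2 := by
  rw [Matrix.mul_sum, Matrix.sum_mul, Matrix.sum_apply]
  refine Finset.sum_congr rfl fun i _ => ?_
  rw [Matrix.mul_smul, Matrix.smul_mul, smul_apply, smul_eq_mul,
    show Yᵀ * (A i * (A i)ᵀ) * Y = ((A i)ᵀ * Y)ᵀ * ((A i)ᵀ * Y) by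
      simp only [transpose_mul, transpose_transpose, Matrix.mul_assoc]]
  simp only [mul_apply, transpose_apply, sq]

end Matrix

theorem stmt_8_general (s m k : ℕ) (ℓ : Fin s → ℕ)
    (A : (i : Fin s) → Matrix (Fin m) (Fin (ℓ i)) ℝ)
    (w : Fin s → ℝ) (hw : ∀ i, 0 ≤ w i)
    (K : Matrix (Fin m) (Fin k) ℝ) (hK : K.rank = k)
    (hest : ∀ j : Fin k, ∃ v : Fin m → ℝ,
      (∑ i, w i • (A i * (A i)ᵀ)) *ᵥ v = fun r => K r j)
    (G : Matrix (Fin m) (Fin m) ℝ)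
    (hG : (∑ i, w i • (A i * (A i)ᵀ)) * G * (∑ i, w i • (A i * (A i)ᵀ)) =
      ∑ i, w i • (A i * (A i)ᵀ)) :
    ∃ (Z : (i : Fin s) → Matrix (Fin (ℓ i)) (Fin k) ℝ)
      (t : Fin s → Fin k → ℝ) (J : Matrix (Fin k) (Fin k) ℝ),
      (∀ i j, 0 ≤ t i j) ∧
      (∀ a b : Fin k, (a : ℕ) < (b : ℕ) → J a b = 0) ∧
      (∑ i, A i * Z i = K * J) ∧
      (∀ (i : Fin s) (j : Fin k), (∑ r, Z i r j ^ 2) ≤ t i j * w i) ∧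
      (∀ j : Fin k, ∑ i, t i j ≤ J j j) ∧
      (∏ j, J j j) * (Kᵀ * G * K).det = 1 := by
  set M := ∑ i, w i • (A i * (A i)ᵀ)
  have hM : M.PosSemidef := posSemidef_sum _ fun i _ => by
    simpa only [conjTranspose_eq_transpose_of_trivial] using
      (posSemidef_self_mul_conjTranspose (A i)).smul (hw i)
  choose v hv using hest
  set U : Matrix (Fin m) (Fin k) ℝ := (of v)ᵀ
  have hMU : M * U = K := by ext r j; exact congrFun (hv j) r
  have hB : Kᵀ * G * K = Uᵀ * M * U := by
    have hMsymm : M.IsSymm := by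
      simpa only [IsSymm, conjTranspose_eq_transpose_of_trivial] using hM.isHermitian.eq
    rw [← hMU, hMsymm.transpose_mul_mul_mul_eq_of_mul_mul_eq_self hG]
  have hBpd : (Kᵀ * G * K).PosDef := by
    rw [hB, ← conjTranspose_eq_transpose_of_trivial]
    refine hM.posDef_conjTranspose_mul_mul ?_
    rw [hMU]
    exact mulVec_injective_of_rank_eq_card (hK.trans (Fintype.card_fin k).symm)
  obtain ⟨J, hJ, hJB, hJdiag⟩ := exists_isLowerTriangular_transpose_mul_mul_eq_diagonal_diag hBpd
  refine ⟨fun i => w i • ((A i)ᵀ * (U * J)), fun i j => w i * ∑ r, ((A i)ᵀ * (U * J)) r j ^ 2, J,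
    fun i j => mul_nonneg (hw i) (Finset.sum_nonneg fun r _ => sq_nonneg _),
    fun a b hab => hJ (show OrderDual.toDual b < OrderDual.toDual a from hab), ?_,
    fun i j => ?_, fun j => ?_, prod_diag_mul_det_eq_one hJ hJB hJdiag⟩
  · calc ∑ i, A i * (w i • ((A i)ᵀ * (U * J))) = M * (U * J) := by
          simp only [M, Matrix.sum_mul, Matrix.smul_mul, Matrix.mul_smul, Matrix.mul_assoc]
      _ = K * J := by rw [← Matrix.mul_assoc, hMU]
  · simp only [Matrix.smul_apply, smul_eq_mul, mul_pow, ← Finset.mul_sum]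
    exact (by ring : _ = _).le
  · rw [← transpose_mul_sum_smul_mul_transpose_mul_apply_self,
      show (U * J)ᵀ * M * (U * J) = Jᵀ * (Kᵀ * G * K) * J by
        simp only [hB, transpose_mul, Matrix.mul_assoc], hJB, diagonal_apply_eq, diag_apply]

/-- Attainment in the SOCP characterization of the `D_K`-criterion: there is a feasible
point `(Zᵢ, tᵢⱼ, J)` with `(∏ⱼ Jⱼⱼ) · det(KᵀGK) = 1`, so the optimal value of the SOCP
equals `det C_K(M(w)) = 1/det(KᵀGK)`. -/
theorem stmt_8 (s m k : ℕ) (ℓ : Fin s → ℕ)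
    (A : (i : Fin s) → Matrix (Fin m) (Fin (ℓ i)) ℝ)
    (w : Fin s → ℝ) (hw : ∀ i, 0 ≤ w i)
    (K : Matrix (Fin m) (Fin k) ℝ) (hK : K.rank = k) (hk : k ≤ m)
    (hest : ∀ j : Fin k, ∃ v : Fin m → ℝ,
      (∑ i, w i • (A i * (A i)ᵀ)) *ᵥ v = fun r => K r j)
    (G : Matrix (Fin m) (Fin m) ℝ)
    (hG : (∑ i, w i • (A i * (A i)ᵀ)) * G * (∑ i, w i • (A i * (A i)ᵀ)) =
      ∑ i, w i • (A i * (A i)ᵀ)) :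
    ∃ (Z : (i : Fin s) → Matrix (Fin (ℓ i)) (Fin k) ℝ)
      (t : Fin s → Fin k → ℝ) (J : Matrix (Fin k) (Fin k) ℝ),
      (∀ i j, 0 ≤ t i j) ∧
      (∀ a b : Fin k, (a : ℕ) < (b : ℕ) → J a b = 0) ∧
      (∑ i, A i * Z i = K * J) ∧
      (∀ (i : Fin s) (j : Fin k), (∑ r, Z i r j ^ 2) ≤ t i j * w i) ∧
      (∀ j : Fin k, ∑ i, t i j ≤ J j j) ∧
      (∏ j, J j j) * (Kᵀ * G * K).det = 1 :=
  stmt_8_general s m k ℓ A w hw K hK hest G hG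
end
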